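/- arXiv:1712.04805 — 2 statements merged into one kernel-verified Lean document; each statement's English description precedes it below -/
import Mathlib

section
/- Let n ≥ 2 and let T : ℝⁿ → ℝⁿ be the affine isometry T(x) = A·x + b, where A is an n×n real orthogonal matrix and b ∈ ℝⁿ. Suppose that T maps no proper hypersurface of the standard cubulation of ℝⁿ onto a proper hypersurface. Then for every closed cube K of the standard cubulation of dimension d with 1 ≤ d ≤ n−1, there exist infinitely many points x ∈ K such that T(x) has at least d+1 non-integer coordinates, i.e. T(x) lies in the interior of a cube of the standard cubulation of dimension strictly greater than d. -/
/-- The proper hypersurface `c + span_ℝ {e_i : i ∈ S}` of the standard cubulation of `ℝⁿ`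
(for `c ∈ ℤⁿ`): the set of points agreeing with the integer point `c` in every
coordinate outside `S`. -/
def cubHypersurface {n : ℕ} (c : Fin n → ℤ) (S : Finset (Fin n)) : Set (Fin n → ℝ) :=
  {x | ∀ i ∉ S, x i = (c i : ℝ)}

/-- The closed cube of the standard cubulation of `ℝⁿ` with base vertex `c ∈ ℤⁿ` and
spanned coordinate directions `S`; its dimension is `S.card`. -/
def stdCube {n : ℕ} (c : Fin n → ℤ) (S : Finset (Fin n)) : Set (Fin n → ℝ) :=
  {x | (∀ i ∈ S, (c i : ℝ) ≤ x i ∧ x i ≤ (c i : ℝ) + 1) ∧ ∀ i ∉ S, x i = (c i : ℝ)}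

/-- The number of non-integer coordinates of a point of `ℝⁿ`; this is the dimension of
the unique cube of the standard cubulation containing the point in its interior. -/
noncomputable def nonIntCoordCount {n : ℕ} (x : Fin n → ℝ) : ℕ :=
  Nat.card {i : Fin n // ¬∃ m : ℤ, x i = (m : ℝ)}

/-! If the cube `K = stdCube c S` of dimension `d` contained only finitely many points whose
image has more than `d` non-integer coordinates, then `K` would be covered by that finite set
and the countably many closed sets `K ∩ T⁻¹ H`, `H` a `d`-dimensional hypersurface. By Baire
(and since `K` has no isolated points), some `T⁻¹ H` contains a relative neighbourhood in `K`
of a point of `K`. Moving along the edge directions of `K` shows that `A` maps the direction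
of `c + span {e_i : i ∈ S}` into that of `H`; both have dimension `d` and `A` is injective,
so `T` maps this proper hypersurface onto `H`. -/

open Topology Filter

theorem Submodule.map_eq_of_le_of_finrank_eq {K V W : Type*} [Field K] [AddCommGroup V]
    [Module K V] [AddCommGroup W] [Module K W] {f : V →ₗ[K] W} (hf : Function.Injective f)
    {p : Submodule K V} {q : Submodule K W} [FiniteDimensional K q] (hle : p.map f ≤ q)
    (hpq : Module.finrank K p = Module.finrank K q) : p.map f = q :=
  Submodule.eq_of_le_of_finrank_eq hle ((p.equivMapOfInjective f hf).finrank_eq.symm.trans hpq)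

section StandardCubulation

variable {n : ℕ}

def coordSubspace (S : Finset (Fin n)) : Submodule ℝ (Fin n → ℝ) :=
  Submodule.span ℝ (Pi.basisFun ℝ (Fin n) '' S)

theorem mem_coordSubspace {S : Finset (Fin n)} {v : Fin n → ℝ} :
    v ∈ coordSubspace S ↔ ∀ i ∉ S, v i = 0 := by
  rw [coordSubspace, Module.Basis.mem_span_image]
  simp [Set.subset_def, not_imp_comm]

theorem finrank_coordSubspace (S : Finset (Fin n)) :
    Module.finrank ℝ (coordSubspace S) = S.card := by
  have hli := (Pi.basisFun ℝ (Fin n)).linearIndependent.comp ((↑) : S → Fin n)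
    Subtype.val_injective
  rw [coordSubspace, Set.image_eq_range]
  exact (finrank_span_eq_card hli).trans (Fintype.card_coe S)

theorem sub_mem_coordSubspace_iff {c : Fin n → ℤ} {S : Finset (Fin n)} {x y : Fin n → ℝ}
    (hy : y ∈ cubHypersurface c S) :
    x - y ∈ coordSubspace S ↔ x ∈ cubHypersurface c S := by
  simp only [mem_coordSubspace, cubHypersurface, Set.mem_ofPred_eq, Pi.sub_apply, sub_eq_zero]
  exact forall₂_congr fun i hi => by rw [hy i hi]

theorem image_cubHypersurface_eq {A : Matrix (Fin n) (Fin n) ℝ}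
    (hA : Function.Injective A.mulVec) {b : Fin n → ℝ} {T : (Fin n → ℝ) → Fin n → ℝ}
    (hT : ∀ x, T x = A.mulVec x + b) {c c' : Fin n → ℤ} {S S' : Finset (Fin n)}
    (hcard : S.card = S'.card) (hle : (coordSubspace S).map A.mulVecLin ≤ coordSubspace S')
    {x : Fin n → ℝ} (hx : x ∈ cubHypersurface c S) (hTx : T x ∈ cubHypersurface c' S') :
    T '' cubHypersurface c S = cubHypersurface c' S' := by
  have hmap : (coordSubspace S).map A.mulVecLin = coordSubspace S' :=
    Submodule.map_eq_of_le_of_finrank_eq hA hle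
      (by rw [finrank_coordSubspace, finrank_coordSubspace, hcard])
  have hTsub : ∀ y, T y - T x = A.mulVec (y - x) := fun y => by
    rw [hT, hT, add_sub_add_right_eq_sub, Matrix.mulVec_sub]
  ext z
  constructor
  · rintro ⟨y, hy, rfl⟩
    rw [← sub_mem_coordSubspace_iff hTx, hTsub]
    exact hle (Submodule.mem_map_of_mem ((sub_mem_coordSubspace_iff hx).2 hy))
  · intro hz
    obtain ⟨v, hv, hAv⟩ := Submodule.mem_map.1 (hmap ▸ (sub_mem_coordSubspace_iff hTx).2 hz)
    refine ⟨v + x, (sub_mem_coordSubspace_iff hx).1 (by simpa using hv), ?_⟩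
    have hTv := hTsub (v + x)
    rw [add_sub_cancel_right, ← Matrix.mulVecLin_apply, hAv] at hTv
    exact sub_left_inj.1 hTv

theorem isClosed_cubHypersurface (c : Fin n → ℤ) (S : Finset (Fin n)) :
    IsClosed (cubHypersurface c S) := by
  simp only [cubHypersurface, Set.ofPred_forall]
  exact isClosed_iInter fun i => isClosed_iInter fun _ =>
    isClosed_eq (continuous_apply i) continuous_const

theorem isClosed_stdCube (c : Fin n → ℤ) (S : Finset (Fin n)) : IsClosed (stdCube c S) := by
  simp only [stdCube, Set.ofPred_and, Set.ofPred_forall]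
  exact (isClosed_iInter fun i => isClosed_iInter fun _ =>
      (isClosed_le continuous_const (continuous_apply i)).inter
        (isClosed_le (continuous_apply i) continuous_const)).inter
    (isClosed_iInter fun i => isClosed_iInter fun _ =>
      isClosed_eq (continuous_apply i) continuous_const)

theorem dist_add_smul_single_self (x : Fin n → ℝ) (j : Fin n) (t : ℝ) :
    dist (x + t • Pi.single j 1) x = |t| := by
  rw [dist_self_add_left, norm_smul, Pi.norm_single, norm_one, mul_one, Real.norm_eq_abs]

theorem exists_add_smul_single_mem_stdCube {c : Fin n → ℤ} {S : Finset (Fin n)}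
    {x : Fin n → ℝ} (hx : x ∈ stdCube c S) {j : Fin n} (hj : j ∈ S) {ε : ℝ} (hε : 0 < ε) :
    ∃ t : ℝ, t ≠ 0 ∧ |t| < ε ∧ x + t • Pi.single j 1 ∈ stdCube c S := by
  obtain ⟨hlo, hhi⟩ := hx.1 j hj
  set δ := min ε 1 / 2 with hδ_def
  have hδ : 0 < δ := by positivity
  have hδε : δ < ε := by have := min_le_left ε 1; linarith
  have hδ1 : δ ≤ 1 / 2 := by have := min_le_right ε 1; linarith
  have hmem : ∀ t, (c j : ℝ) ≤ x j + t → x j + t ≤ c j + 1 →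
      x + t • Pi.single j 1 ∈ stdCube c S := by
    intro t h₁ h₂
    refine ⟨fun i hi => ?_, fun i hi => ?_⟩
    · rcases eq_or_ne i j with rfl | hij
      · simpa using ⟨h₁, h₂⟩
      · simpa [hij] using hx.1 i hi
    · have hij : i ≠ j := by rintro rfl; exact hi hj
      simpa [hij] using hx.2 i hi
  by_cases hmid : x j ≤ c j + 1 / 2
  · exact ⟨δ, hδ.ne', by rwa [abs_of_pos hδ], hmem δ (by linarith) (by linarith)⟩
  · exact ⟨-δ, neg_ne_zero.2 hδ.ne', by rwa [abs_neg, abs_of_pos hδ],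
      hmem (-δ) (by linarith) (by linarith)⟩

theorem perfect_stdCube (c : Fin n → ℤ) {S : Finset (Fin n)} (hS : S.Nonempty) :
    Perfect (stdCube c S) := by
  refine ⟨isClosed_stdCube c S, preperfect_iff_nhds.2 fun x hx U hU => ?_⟩
  obtain ⟨j, hj⟩ := hS
  obtain ⟨ε, hε, hball⟩ := Metric.mem_nhds_iff.1 hU
  obtain ⟨t, ht, htε, hmem⟩ := exists_add_smul_single_mem_stdCube hx hj hε
  refine ⟨_, ⟨hball ?_, hmem⟩, ?_⟩
  · rwa [Metric.mem_ball, dist_add_smul_single_self]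
  · simp [ht]

theorem exists_mem_cubHypersurface_of_nonIntCoordCount_le {y : Fin n → ℝ} {d : ℕ}
    (hy : nonIntCoordCount y ≤ d) (hd : d ≤ n) :
    ∃ (c : Fin n → ℤ) (S : Finset (Fin n)), S.card = d ∧ y ∈ cubHypersurface c S := by
  classical
  set N := Finset.univ.filter fun i => ¬∃ m : ℤ, y i = m
  have hN : N.card ≤ d := by
    rwa [nonIntCoordCount, Nat.card_eq_fintype_card, Fintype.card_subtype] at hy
  obtain ⟨S, hNS, -, hS⟩ :=
    Finset.exists_subsuperset_card_eq (Finset.subset_univ N) hN (by simpa using hd)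
  refine ⟨fun i => ⌊y i⌋, S, hS, fun i hi => ?_⟩
  obtain ⟨m, hm⟩ : ∃ m : ℤ, y i = m := by
    by_contra h
    exact hi (hNS (Finset.mem_filter.2 ⟨Finset.mem_univ i, h⟩))
  simp [hm]

theorem exists_eventually_mem_cubHypersurface {K : Set (Fin n → ℝ)} (hK : Perfect K)
    (hKne : K.Nonempty) {T : (Fin n → ℝ) → Fin n → ℝ} (hT : Continuous T) {d : ℕ}
    (hd : d ≤ n) (hfin : {x ∈ K | d + 1 ≤ nonIntCoordCount (T x)}.Finite) :
    ∃ x ∈ K, ∃ (c : Fin n → ℤ) (S : Finset (Fin n)), S.card = d ∧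
      ∀ᶠ y in 𝓝[K] x, T y ∈ cubHypersurface c S := by
  set G := {x ∈ K | d + 1 ≤ nonIntCoordCount (T x)}
  have : CompleteSpace K := hK.closed.completeSpace_coe
  have : Nonempty K := hKne.to_subtype
  let f : Option ((Fin n → ℤ) × {S : Finset (Fin n) // S.card = d}) → Set K
    | none => (↑) ⁻¹' G
    | some (c, S) => {y | T y ∈ cubHypersurface c S}
  have hclosed : ∀ p, IsClosed (f p)
    | none => hfin.isClosed.preimage continuous_subtype_val
    | some (c, S) => (isClosed_cubHypersurface c S).preimage (hT.comp continuous_subtype_val)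
  have hcover : ⋃ p, f p = Set.univ := by
    refine Set.eq_univ_of_forall fun y => Set.mem_iUnion.2 ?_
    by_cases hy : d + 1 ≤ nonIntCoordCount (T y)
    · exact ⟨none, y.2, hy⟩
    · obtain ⟨c, S, hS, hyS⟩ :=
        exists_mem_cubHypersurface_of_nonIntCoordCount_le (y := T y) (by omega) hd
      exact ⟨some (c, ⟨S, hS⟩), hyS⟩
  obtain ⟨p, x, hx⟩ := nonempty_interior_of_iUnion_of_closed hclosed hcover
  have hnhds : (↑) '' f p ∈ 𝓝[K] (x : Fin n → ℝ) :=
    mem_nhds_subtype_iff_nhdsWithin.1 (mem_interior_iff_mem_nhds.1 hx)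
  rcases p with _ | ⟨c, S, hS⟩
  · obtain ⟨U, hU, hUK⟩ := mem_nhdsWithin_iff_exists_mem_nhds_inter.1 hnhds
    refine absurd (hfin.subset fun y hy => ?_)
      (Set.Infinite.of_accPt ((hK.acc x x.2).nhds_inter hU))
    obtain ⟨z, hz, rfl⟩ := hUK hy
    exact hz
  · refine ⟨x, x.2, c, S, hS, ?_⟩
    filter_upwards [hnhds] with z ⟨y, hy, hyz⟩
    exact hyz ▸ hy

theorem map_coordSubspace_le_of_eventually_mem {A : Matrix (Fin n) (Fin n) ℝ} {b : Fin n → ℝ}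
    {T : (Fin n → ℝ) → Fin n → ℝ} (hT : ∀ x, T x = A.mulVec x + b) {c c' : Fin n → ℤ}
    {S S' : Finset (Fin n)} {x : Fin n → ℝ} (hx : x ∈ stdCube c S)
    (h : ∀ᶠ y in 𝓝[stdCube c S] x, T y ∈ cubHypersurface c' S') :
    (coordSubspace S).map A.mulVecLin ≤ coordSubspace S' := by
  rw [coordSubspace, Submodule.map_span_le]
  rintro _ ⟨j, hj, rfl⟩
  obtain ⟨ε, hε, hball⟩ := Metric.mem_nhdsWithin_iff.1 h
  obtain ⟨t, ht, htε, hmem⟩ := exists_add_smul_single_mem_stdCube hx hj hε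
  have hTy : T (x + t • Pi.single j 1) ∈ cubHypersurface c' S' :=
    hball ⟨by rwa [Metric.mem_ball, dist_add_smul_single_self], hmem⟩
  have hsub := (sub_mem_coordSubspace_iff (h.self_of_nhdsWithin hx)).2 hTy
  rw [hT, hT, add_sub_add_right_eq_sub, Matrix.mulVec_add, add_sub_cancel_left,
    Matrix.mulVec_smul] at hsub
  simpa using (Submodule.smul_mem_iff _ ht).1 hsub

end StandardCubulation

theorem infinite_points_mapped_to_higher_cubes_general {n : ℕ}
    (A : Matrix (Fin n) (Fin n) ℝ) (hA : A ∈ Matrix.orthogonalGroup (Fin n) ℝ)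
    (b : Fin n → ℝ) (T : (Fin n → ℝ) → Fin n → ℝ)
    (hT : ∀ x, T x = A.mulVec x + b)
    (hnone : ¬∃ (c : Fin n → ℤ) (S : Finset (Fin n)) (c' : Fin n → ℤ)
        (S' : Finset (Fin n)),
        0 < S.card ∧ S.card < n ∧ 0 < S'.card ∧ S'.card < n ∧
        T '' cubHypersurface c S = cubHypersurface c' S') :
    ∀ (c : Fin n → ℤ) (S : Finset (Fin n)), 1 ≤ S.card → S.card ≤ n - 1 →
      {x ∈ stdCube c S | S.card + 1 ≤ nonIntCoordCount (T x)}.Infinite := by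
  intro c S hS₁ hSn
  by_contra hfin
  have hTc : Continuous T := by
    rw [funext hT]
    fun_prop
  have hvertex : (fun i => (c i : ℝ)) ∈ stdCube c S :=
    ⟨fun i _ => ⟨le_rfl, by linarith⟩, fun i _ => rfl⟩
  obtain ⟨x, hx, c', S', hcard, hxT⟩ :=
    exists_eventually_mem_cubHypersurface (perfect_stdCube c (Finset.card_pos.1 hS₁))
      ⟨_, hvertex⟩ hTc (by simpa using S.card_le_univ) (Set.not_infinite.1 hfin)
  have hAinj : Function.Injective A.mulVec :=
    Matrix.mulVec_injective_iff_isUnit.2 (Unitary.isUnit_coe (U := ⟨A, hA⟩))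
  exact hnone ⟨c, S, c', S', by omega, by omega, by omega, by omega,
    image_cubHypersurface_eq hAinj hT hcard.symm
      (map_coordSubspace_le_of_eventually_mem hT hx hxT) hx.2 (hxT.self_of_nhdsWithin hx)⟩

/-- Let `n ≥ 2` and let `T x = A x + b` be an affine isometry of `ℝⁿ`
(`A` orthogonal) that maps no proper hypersurface of the standard cubulation onto a
proper hypersurface. Then every closed cube `K` of the standard cubulation of dimension
`d` with `1 ≤ d ≤ n - 1` contains infinitely many points `x` such that `T x` has at
least `d + 1` non-integer coordinates, i.e. `T x` lies in the interior of a cube of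
dimension strictly greater than `d`. -/
theorem infinite_points_mapped_to_higher_cubes {n : ℕ} (hn : 2 ≤ n)
    (A : Matrix (Fin n) (Fin n) ℝ) (hA : A ∈ Matrix.orthogonalGroup (Fin n) ℝ)
    (b : Fin n → ℝ) (T : (Fin n → ℝ) → Fin n → ℝ)
    (hT : ∀ x, T x = A.mulVec x + b)
    (hnone : ¬∃ (c : Fin n → ℤ) (S : Finset (Fin n)) (c' : Fin n → ℤ)
        (S' : Finset (Fin n)),
        0 < S.card ∧ S.card < n ∧ 0 < S'.card ∧ S'.card < n ∧
        T '' cubHypersurface c S = cubHypersurface c' S') :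
    ∀ (c : Fin n → ℤ) (S : Finset (Fin n)), 1 ≤ S.card → S.card ≤ n - 1 →
      {x ∈ stdCube c S | S.card + 1 ≤ nonIntCoordCount (T x)}.Infinite :=
  infinite_points_mapped_to_higher_cubes_general A hA b T hT hnone
end

section
/- Let a, b ∈ ℤ² be linearly independent integer vectors with a₁² + a₂² = b₁² + b₂², and suppose that b is not obtained from a by a signed permutation of coordinates, i.e. b ∉ {(ε₁a₁, ε₂a₂) : ε₁, ε₂ ∈ {±1}} ∪ {(ε₁a₂, ε₂a₁) : ε₁, ε₂ ∈ {±1}}. Then there exists a linear isometry f of Euclidean ℝ² with f(a) = b and f(b) = a; moreover every such f maps the subgroup ℤa + ℤb of ℝ² onto itself and satisfies f(ℤ²) ≠ ℤ². -/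
/-!
Since `‖a‖ = ‖b‖`, the reflection in the line orthogonal to `a - b` swaps `a` and `b`, and any
additive map swapping `a` and `b` permutes the generators of `ℤa + ℤb`. If a linear isometry `f`
preserved `ℤ²`, the images of the standard basis vectors would be orthonormal integer vectors, so
`f` would be a signed permutation matrix and `b = f a` a signed coordinate permutation of `a`.
-/

/-- The integer vector `a ∈ ℤ²` regarded as a point of Euclidean `ℝ²`. -/
noncomputable def intVec (a : Fin 2 → ℤ) : EuclideanSpace ℝ (Fin 2) :=
  WithLp.toLp 2 fun i => (a i : ℝ)

/-- The lattice `ℤu + ℤv`, i.e. the additive subgroup of `ℝ²` generated by `u, v`,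
as a subset of `ℝ²`. -/
def latticeSet (u v : EuclideanSpace ℝ (Fin 2)) : Set (EuclideanSpace ℝ (Fin 2)) :=
  {x | ∃ p q : ℤ, x = p • u + q • v}

/-- The integer lattice `ℤ² ⊆ ℝ²`, the vertex set of the standard cubulation. -/
def intLattice2 : Set (EuclideanSpace ℝ (Fin 2)) :=
  {x | ∀ i, ∃ m : ℤ, x i = (m : ℝ)}

open scoped RealInnerProductSpace

def IsSignedCoordPerm (a b : Fin 2 → ℤ) : Prop :=
  ∃ ε₁ ε₂ : ℤ, (ε₁ = 1 ∨ ε₁ = -1) ∧ (ε₂ = 1 ∨ ε₂ = -1) ∧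
    ((b 0 = ε₁ * a 0 ∧ b 1 = ε₂ * a 1) ∨ (b 0 = ε₁ * a 1 ∧ b 1 = ε₂ * a 0))

theorem Int.eq_zero_and_sign_of_mul_self_add_mul_self_eq_one {x y : ℤ} (h : x * x + y * y = 1) :
    (x = 0 ∧ (y = 1 ∨ y = -1)) ∨ ((x = 1 ∨ x = -1) ∧ y = 0) := by
  have hx : x * x ≤ 1 := by nlinarith [mul_self_nonneg y]
  have hy : y * y ≤ 1 := by nlinarith [mul_self_nonneg x]
  obtain ⟨hx₁, hx₂⟩ : -1 ≤ x ∧ x ≤ 1 := ⟨by nlinarith, by nlinarith⟩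
  obtain ⟨hy₁, hy₂⟩ : -1 ≤ y ∧ y ≤ 1 := ⟨by nlinarith, by nlinarith⟩
  interval_cases x <;> interval_cases y <;> simp_all

theorem isSignedCoordPerm_of_orthonormal {m n : Fin 2 → ℤ}
    (hm : m 0 * m 0 + m 1 * m 1 = 1) (hn : n 0 * n 0 + n 1 * n 1 = 1)
    (hmn : m 0 * n 0 + m 1 * n 1 = 0) (a : Fin 2 → ℤ) :
    IsSignedCoordPerm a (a 0 • m + a 1 • n) := by
  rcases Int.eq_zero_and_sign_of_mul_self_add_mul_self_eq_one hm with ⟨hm0, hm1⟩ | ⟨hm0, hm1⟩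
  · have hn1 : n 1 = 0 := by
      rcases hm1 with h | h <;> simp [hm0, h] at hmn <;> exact hmn
    have hn0 : n 0 = 1 ∨ n 0 = -1 := by
      rcases Int.eq_zero_and_sign_of_mul_self_add_mul_self_eq_one hn with h | h <;> simp_all
    exact ⟨n 0, m 1, hn0, hm1, Or.inr ⟨by simp [hm0]; ring, by simp [hn1]; ring⟩⟩
  · have hn0 : n 0 = 0 := by
      rcases hm0 with h | h <;> simp [hm1, h] at hmn <;> exact hmn
    have hn1 : n 1 = 1 ∨ n 1 = -1 := by
      rcases Int.eq_zero_and_sign_of_mul_self_add_mul_self_eq_one hn with h | h <;> simp_all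
    exact ⟨m 0, n 1, hm0, hn1, Or.inl ⟨by simp [hn0]; ring, by simp [hm1]; ring⟩⟩

theorem intVec_apply (a : Fin 2 → ℤ) (i : Fin 2) : intVec a i = a i := rfl

theorem intVec_injective : Function.Injective intVec := fun a b h =>
  funext fun i => by simpa [intVec_apply] using congrArg (· i) h

theorem intVec_add (a b : Fin 2 → ℤ) : intVec (a + b) = intVec a + intVec b := by
  ext i; simp [intVec_apply]

theorem intVec_zsmul (k : ℤ) (a : Fin 2 → ℤ) : intVec (k • a) = k • intVec a := by
  ext i; simp [intVec_apply]

theorem inner_intVec (a b : Fin 2 → ℤ) :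
    ⟪intVec a, intVec b⟫ = ((a 0 * b 0 + a 1 * b 1 : ℤ) : ℝ) := by
  simp [PiLp.inner_apply, Fin.sum_univ_two, intVec_apply, mul_comm]

theorem norm_intVec_eq_norm_intVec {a b : Fin 2 → ℤ}
    (h : a 0 ^ 2 + a 1 ^ 2 = b 0 ^ 2 + b 1 ^ 2) : ‖intVec a‖ = ‖intVec b‖ := by
  rw [← sq_eq_sq₀ (norm_nonneg _) (norm_nonneg _), ← real_inner_self_eq_norm_sq,
    ← real_inner_self_eq_norm_sq, inner_intVec, inner_intVec]
  exact_mod_cast by linear_combination h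

theorem mem_intLattice2_iff {x : EuclideanSpace ℝ (Fin 2)} :
    x ∈ intLattice2 ↔ ∃ m, intVec m = x := by
  constructor
  · intro hx
    choose m hm using hx
    exact ⟨m, by ext i; exact (hm i).symm⟩
  · rintro ⟨m, rfl⟩ i
    exact ⟨m i, rfl⟩

theorem exists_linearIsometry_swap {F : Type*} [NormedAddCommGroup F] [InnerProductSpace ℝ F]
    {v w : F} (h : ‖v‖ = ‖w‖) : ∃ f : F →ₗᵢ[ℝ] F, f v = w ∧ f w = v := by
  set σ := Submodule.reflection (ℝ ∙ (v - w))ᗮ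
  have hσv : σ v = w := Submodule.reflection_sub h
  have hσw : σ w = v := hσv ▸ Submodule.reflection_reflection _ v
  exact ⟨σ.toLinearIsometry, hσv, hσw⟩

theorem image_latticeSet_of_swap {F : Type*}
    [FunLike F (EuclideanSpace ℝ (Fin 2)) (EuclideanSpace ℝ (Fin 2))]
    [AddMonoidHomClass F (EuclideanSpace ℝ (Fin 2)) (EuclideanSpace ℝ (Fin 2))] (f : F)
    {u v : EuclideanSpace ℝ (Fin 2)} (hu : f u = v) (hv : f v = u) :
    f '' latticeSet u v = latticeSet u v := by
  have hmap (p q : ℤ) : f (p • u + q • v) = q • u + p • v := by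
    rw [map_add, map_zsmul, map_zsmul, hu, hv, add_comm]
  ext x
  constructor
  · rintro ⟨_, ⟨p, q, rfl⟩, rfl⟩
    exact ⟨q, p, hmap p q⟩
  · rintro ⟨p, q, rfl⟩
    exact ⟨_, ⟨q, p, rfl⟩, hmap q p⟩

theorem isSignedCoordPerm_of_image_intLattice2_eq
    (f : EuclideanSpace ℝ (Fin 2) →ₗᵢ[ℝ] EuclideanSpace ℝ (Fin 2))
    (hf : f '' intLattice2 = intLattice2) {a b : Fin 2 → ℤ} (hab : f (intVec a) = intVec b) :
    IsSignedCoordPerm a b := by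
  have hdot {c d c' d' : Fin 2 → ℤ} (hc : f (intVec c) = intVec c')
      (hd : f (intVec d) = intVec d') : c' 0 * d' 0 + c' 1 * d' 1 = c 0 * d 0 + c 1 * d 1 := by
    have := f.inner_map_map (intVec c) (intVec d)
    rw [hc, hd, inner_intVec, inner_intVec] at this
    exact_mod_cast this
  have hint (c : Fin 2 → ℤ) : ∃ c', f (intVec c) = intVec c' := by
    have hc : f (intVec c) ∈ intLattice2 :=
      hf ▸ Set.mem_image_of_mem f (mem_intLattice2_iff.2 ⟨c, rfl⟩)
    obtain ⟨c', hc'⟩ := mem_intLattice2_iff.1 hc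
    exact ⟨c', hc'.symm⟩
  obtain ⟨m, hm⟩ := hint (Pi.single 0 1)
  obtain ⟨n, hn⟩ := hint (Pi.single 1 1)
  have hb : b = a 0 • m + a 1 • n := by
    have ha : intVec a = a 0 • intVec (Pi.single 0 1) + a 1 • intVec (Pi.single 1 1) := by
      ext i; fin_cases i <;> simp [intVec_apply]
    apply intVec_injective
    rw [← hab, ha, map_add, map_zsmul, map_zsmul, hm, hn, intVec_add, intVec_zsmul, intVec_zsmul]
  rw [hb]
  exact isSignedCoordPerm_of_orthonormal (by simpa using hdot hm hm) (by simpa using hdot hn hn)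
    (by simpa using hdot hm hn) a

theorem pythagorean_double_isometry_general (a b : Fin 2 → ℤ)
    (hlen : a 0 ^ 2 + a 1 ^ 2 = b 0 ^ 2 + b 1 ^ 2)
    (hdist : ¬∃ ε₁ ε₂ : ℤ, (ε₁ = 1 ∨ ε₁ = -1) ∧ (ε₂ = 1 ∨ ε₂ = -1) ∧
      ((b 0 = ε₁ * a 0 ∧ b 1 = ε₂ * a 1) ∨ (b 0 = ε₁ * a 1 ∧ b 1 = ε₂ * a 0))) :
    (∃ f : EuclideanSpace ℝ (Fin 2) →ₗᵢ[ℝ] EuclideanSpace ℝ (Fin 2),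
        f (intVec a) = intVec b ∧ f (intVec b) = intVec a) ∧
    ∀ f : EuclideanSpace ℝ (Fin 2) →ₗᵢ[ℝ] EuclideanSpace ℝ (Fin 2),
      f (intVec a) = intVec b → f (intVec b) = intVec a →
        f '' latticeSet (intVec a) (intVec b) = latticeSet (intVec a) (intVec b) ∧
        f '' intLattice2 ≠ intLattice2 :=
  ⟨exists_linearIsometry_swap (norm_intVec_eq_norm_intVec hlen), fun f hfa hfb =>
    ⟨image_latticeSet_of_swap f hfa hfb,
      fun hf => hdist (isSignedCoordPerm_of_image_intLattice2_eq f hf hfa)⟩⟩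

/-- Let `a, b ∈ ℤ²` be linearly independent with
`a₁² + a₂² = b₁² + b₂²`, and suppose `b` is not obtained from `a` by a signed
permutation of coordinates. Then there is a linear isometry `f` of Euclidean `ℝ²`
exchanging `a` and `b`; moreover every such `f` maps the lattice `ℤa + ℤb` onto itself
and satisfies `f(ℤ²) ≠ ℤ²`. -/
theorem pythagorean_double_isometry (a b : Fin 2 → ℤ)
    (hind : LinearIndependent ℝ ![intVec a, intVec b])
    (hlen : a 0 ^ 2 + a 1 ^ 2 = b 0 ^ 2 + b 1 ^ 2)
    (hdist : ¬∃ ε₁ ε₂ : ℤ, (ε₁ = 1 ∨ ε₁ = -1) ∧ (ε₂ = 1 ∨ ε₂ = -1) ∧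
      ((b 0 = ε₁ * a 0 ∧ b 1 = ε₂ * a 1) ∨ (b 0 = ε₁ * a 1 ∧ b 1 = ε₂ * a 0))) :
    (∃ f : EuclideanSpace ℝ (Fin 2) →ₗᵢ[ℝ] EuclideanSpace ℝ (Fin 2),
        f (intVec a) = intVec b ∧ f (intVec b) = intVec a) ∧
    ∀ f : EuclideanSpace ℝ (Fin 2) →ₗᵢ[ℝ] EuclideanSpace ℝ (Fin 2),
      f (intVec a) = intVec b → f (intVec b) = intVec a →
        f '' latticeSet (intVec a) (intVec b) = latticeSet (intVec a) (intVec b) ∧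
        f '' intLattice2 ≠ intLattice2 :=
  pythagorean_double_isometry_general a b hlen hdist
end
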